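/- In the free associative algebra A_2 = K⟨x_1, x_2⟩ over a field K of characteristic 0, the element 2 x_2 x_1 [x_3, x_4] − x_1 x_2 [x_3, x_4] ∈ K⟨x_1, x_2, x_3, x_4⟩ is not balanced, i.e., it does not lie in the span of all elements x_{i_1} x_{i_2} ⋯ x_{i_m} − x_{i_2} ⋯ x_{i_m} x_{i_1} of degree m = 4. -/

import Mathlib

/-!
A balanced element is a sum of commutators `a * b - b * a`, so every trace functional
`w ↦ tr (ρ w)` of a matrix representation `ρ` vanishes on it. Sending `xᵢ` to the matrix unit
`E_{i,i+1}` (indices mod 4), a word in distinct letters has nonzero trace only if it is a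
cyclic rotation of `x₁x₂x₃x₄`; this detects the summand `-x₁x₂x₃x₄` of the given element,
whose trace is therefore `-1`. In the code the letter `xᵢ` is `FreeAlgebra.ι R (i - 1)`.
-/

open Matrix

section TraceFunctional

variable {R A n : Type*} [CommRing R] [Ring A] [Algebra R A] [Fintype n] [DecidableEq n]

theorem Matrix.trace_algHom_commutator (ρ : A →ₐ[R] Matrix n n R) (a b : A) :
    trace (ρ (a * b - b * a)) = 0 := by
  rw [map_sub, map_mul, map_mul, trace_sub, trace_mul_comm, sub_self]

theorem Matrix.span_commutators_le_ker_trace_comp (ρ : A →ₐ[R] Matrix n n R) :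
    Submodule.span R {w : A | ∃ a b : A, w = a * b - b * a} ≤
      LinearMap.ker ((traceLinearMap n R R).comp ρ.toLinearMap) := by
  rw [Submodule.span_le]
  rintro w ⟨a, b, rfl⟩
  exact trace_algHom_commutator ρ a b

end TraceFunctional

noncomputable def cycleRep (R : Type*) [CommRing R] :
    FreeAlgebra R (Fin 4) →ₐ[R] Matrix (Fin 4) (Fin 4) R :=
  FreeAlgebra.lift R fun i => single i (i + 1) 1

theorem trace_cycleRep_eq_neg_one (R : Type*) [CommRing R] :
    trace (cycleRep R (2 * FreeAlgebra.ι R (1 : Fin 4) * FreeAlgebra.ι R (0 : Fin 4) *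
        ⁅FreeAlgebra.ι R (2 : Fin 4), FreeAlgebra.ι R (3 : Fin 4)⁆ -
      FreeAlgebra.ι R (0 : Fin 4) * FreeAlgebra.ι R (1 : Fin 4) *
        ⁅FreeAlgebra.ι R (2 : Fin 4), FreeAlgebra.ι R (3 : Fin 4)⁆)) = -1 := by
  simp [cycleRep, Ring.lie_def, map_ofNat, mul_sub, Matrix.mul_assoc, single_mul_single_same,
    single_mul_single_of_ne, trace_single_eq_same]

theorem stmt13_general (K : Type*) [Field K] :
    2 * FreeAlgebra.ι K (1 : Fin 4) * FreeAlgebra.ι K (0 : Fin 4) *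
        ⁅FreeAlgebra.ι K (2 : Fin 4), FreeAlgebra.ι K (3 : Fin 4)⁆ -
      FreeAlgebra.ι K (0 : Fin 4) * FreeAlgebra.ι K (1 : Fin 4) *
        ⁅FreeAlgebra.ι K (2 : Fin 4), FreeAlgebra.ι K (3 : Fin 4)⁆ ∉
    Submodule.span K {w : FreeAlgebra K (Fin 4) |
      ∃ (i₀ : Fin 4) (l : List (Fin 4)), l.length = 3 ∧
        w = FreeAlgebra.ι K i₀ * (l.map (FreeAlgebra.ι K)).prod -
            (l.map (FreeAlgebra.ι K)).prod * FreeAlgebra.ι K i₀} := by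
  intro hmem
  have balanced_subset_commutators :
      {w : FreeAlgebra K (Fin 4) | ∃ (i₀ : Fin 4) (l : List (Fin 4)), l.length = 3 ∧
        w = FreeAlgebra.ι K i₀ * (l.map (FreeAlgebra.ι K)).prod -
            (l.map (FreeAlgebra.ι K)).prod * FreeAlgebra.ι K i₀} ⊆
        {w | ∃ a b, w = a * b - b * a} := by
    rintro w ⟨i₀, l, -, rfl⟩
    exact ⟨_, _, rfl⟩
  have htrace := span_commutators_le_ker_trace_comp (cycleRep K)
    (Submodule.span_mono balanced_subset_commutators hmem)
  rw [LinearMap.mem_ker, LinearMap.comp_apply, AlgHom.toLinearMap_apply, traceLinearMap_apply,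
    trace_cycleRep_eq_neg_one] at htrace
  exact neg_ne_zero.mpr one_ne_zero htrace

theorem stmt13 (K : Type*) [Field K] [CharZero K] :
    2 * FreeAlgebra.ι K (1 : Fin 4) * FreeAlgebra.ι K (0 : Fin 4) *
        ⁅FreeAlgebra.ι K (2 : Fin 4), FreeAlgebra.ι K (3 : Fin 4)⁆ -
      FreeAlgebra.ι K (0 : Fin 4) * FreeAlgebra.ι K (1 : Fin 4) *
        ⁅FreeAlgebra.ι K (2 : Fin 4), FreeAlgebra.ι K (3 : Fin 4)⁆ ∉
    Submodule.span K {w : FreeAlgebra K (Fin 4) |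
      ∃ (i₀ : Fin 4) (l : List (Fin 4)), l.length = 3 ∧
        w = FreeAlgebra.ι K i₀ * (l.map (FreeAlgebra.ι K)).prod -
            (l.map (FreeAlgebra.ι K)).prod * FreeAlgebra.ι K i₀} :=
  stmt13_general K
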